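/- Let η ∈ ℝ^p be nonzero, let m₁ ∈ ℝ^p, and let ν be any Lebesgue probability density on ℝ^p. Then ∫_{x : |(x−m₁)ᵀη| < ‖η‖₂²/2} ν(x−η) dx ≤ ∫_{x : |(x−m₁)ᵀη| ≥ ‖η‖₂²/2} ν(x) dx. -/
import Mathlib


open MeasureTheory
open scoped RealInnerProductSpace

/-- A Lebesgue probability density on `ℝ^p`: a nonnegative measurable function
integrating to one. -/
def IsProbDensity {p : ℕ} (ν : EuclideanSpace ℝ (Fin p) → ℝ) : Prop :=
  Measurable ν ∧ (∀ x, 0 ≤ ν x) ∧ Integrable ν ∧ (∫ x, ν x) = 1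

/-- change-of-variables step in the proof of Lemma 1: for any
nonzero `η`, any `m₁ ∈ ℝ^p`, and any Lebesgue probability density `ν` on `ℝ^p`,
`∫_{x : |(x-m₁)ᵀη| < ‖η‖₂²/2} ν(x-η) dx ≤ ∫_{x : |(x-m₁)ᵀη| ≥ ‖η‖₂²/2} ν(x) dx`. -/
theorem shifted_mass_bound {p : ℕ} (hp : 1 ≤ p)
    (m₁ : EuclideanSpace ℝ (Fin p))
    (ν : EuclideanSpace ℝ (Fin p) → ℝ) (hν : IsProbDensity ν)
    (η : EuclideanSpace ℝ (Fin p)) (hη : η ≠ 0) :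
    (∫ x in {x : EuclideanSpace ℝ (Fin p) | |⟪x - m₁, η⟫| < ‖η‖ ^ 2 / 2}, ν (x - η)) ≤
      ∫ x in {x : EuclideanSpace ℝ (Fin p) | ‖η‖ ^ 2 / 2 ≤ |⟪x - m₁, η⟫|}, ν x := by
  obtain ⟨hmeas, hpos, hint, -⟩ := hν
  set s : Set (EuclideanSpace ℝ (Fin p)) :=
    {x | |⟪x - m₁, η⟫| < ‖η‖ ^ 2 / 2} with hs
  set t : Set (EuclideanSpace ℝ (Fin p)) :=
    {x | ‖η‖ ^ 2 / 2 ≤ |⟪x - m₁, η⟫|} with ht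
  have hmp : MeasurePreserving (fun y : EuclideanSpace ℝ (Fin p) => y + η) volume volume :=
    measurePreserving_add_right volume η
  have hemb : MeasurableEmbedding (fun y : EuclideanSpace ℝ (Fin p) => y + η) :=
    (MeasurableEquiv.addRight η).measurableEmbedding
  have hcov : (∫ x in s, ν (x - η)) =
      ∫ y in (fun y : EuclideanSpace ℝ (Fin p) => y + η) ⁻¹' s, ν y := by
    rw [← hmp.setIntegral_preimage_emb hemb (fun x => ν (x - η)) s]
    simp
  rw [hcov]
  have hsub : (fun y : EuclideanSpace ℝ (Fin p) => y + η) ⁻¹' s ⊆ t := by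
    intro y hy
    simp only [Set.mem_preimage, hs, Set.mem_setOf_eq] at hy
    have hrw : ⟪y + η - m₁, η⟫ = ⟪y - m₁, η⟫ + ‖η‖ ^ 2 := by
      rw [show y + η - m₁ = (y - m₁) + η by abel, inner_add_left,
        real_inner_self_eq_norm_sq]
    rw [hrw] at hy
    have hηpos : (0:ℝ) < ‖η‖ ^ 2 := by have := norm_pos_iff.mpr hη; positivity
    have : ⟪y - m₁, η⟫ ≤ -(‖η‖ ^ 2 / 2) := by
      cases abs_lt.mp hy with
      | intro h1 h2 => linarith
    show ‖η‖ ^ 2 / 2 ≤ |⟪y - m₁, η⟫|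
    calc ‖η‖ ^ 2 / 2 ≤ -⟪y - m₁, η⟫ := by linarith
    _ ≤ |⟪y - m₁, η⟫| := neg_le_abs _
  exact setIntegral_mono_set hint.integrableOn
    (Filter.Eventually.of_forall hpos) (HasSubset.Subset.eventuallyLE hsub)
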